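/- arXiv:1405.6363 — 2 statements merged into one kernel-verified Lean document; each statement's English description precedes it below -/
import Mathlib

section
/- Let m be an even positive integer and let 𝒞 be the order m dimension n symmetric Cauchy tensor with generating vector c ∈ ℝ^n. Then 𝒞 is negative semi-definite (i.e., 𝒞x^m ≤ 0 for all x ∈ ℝ^n) if and only if c_i < 0 for every i ∈ {1,…,n}. -/
/-!
Testing against a unit vector `e_k` gives `𝒞 e_k^m = 1 / (m c_k)`, so negative
semi-definiteness forces `c_k < 0`. Conversely, if every `c_k` is negative then so is every
`s = c_{i_1} + ⋯ + c_{i_m}`, and `-1 / s = ∫₀^∞ e^{s t} dt`; expanding the `m`-th power of a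
sum turns this into `-𝒞x^m = ∫₀^∞ (∑ₖ x_k e^{c_k t})^m dt`, which is nonnegative because `m`
is even.
-/

open MeasureTheory Set Real Finset

variable {ι : Type*} [Fintype ι]

noncomputable def cauchyForm (c : ι → ℝ) (m : ℕ) (x : ι → ℝ) : ℝ :=
  ∑ i : Fin m → ι, (∏ j, x (i j)) / ∑ j, c (i j)

lemma cauchyForm_single [DecidableEq ι] (c : ι → ℝ) (m : ℕ) (k : ι) :
    cauchyForm c m (Pi.single k 1) = 1 / (m * c k) := by
  rw [cauchyForm, Fintype.sum_eq_single (fun _ ↦ k)]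
  · simp
  · intro i hi
    obtain ⟨j, hj⟩ := Function.ne_iff.mp hi
    rw [prod_eq_zero (mem_univ j) (Pi.single_eq_of_ne hj 1), zero_div]

lemma neg_of_cauchyForm_single_nonpos [DecidableEq ι] {c : ι → ℝ} {m : ℕ} {k : ι}
    (hmc : (m : ℝ) * c k ≠ 0) (h : cauchyForm c m (Pi.single k 1) ≤ 0) : c k < 0 := by
  rw [cauchyForm_single, one_div_nonpos] at h
  exact neg_of_mul_neg_right (h.lt_of_ne hmc) m.cast_nonneg

lemma integral_exp_mul_Ioi_zero {a : ℝ} (ha : a < 0) : ∫ t in Ioi 0, exp (a * t) = -a⁻¹ := by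
  simp [integral_exp_mul_Ioi ha, neg_div]

lemma sum_mul_exp_pow (x c : ι → ℝ) (m : ℕ) (t : ℝ) :
    (∑ k, x k * exp (c k * t)) ^ m =
      ∑ i : Fin m → ι, (∏ j, x (i j)) * exp ((∑ j, c (i j)) * t) := by
  simp only [Fintype.sum_pow, prod_mul_distrib, ← exp_sum, sum_mul]

lemma cauchyForm_eq_neg_integral {c : ι → ℝ} {m : ℕ} (hc : ∀ i : Fin m → ι, ∑ j, c (i j) < 0)
    (x : ι → ℝ) : cauchyForm c m x = -∫ t in Ioi 0, (∑ k, x k * exp (c k * t)) ^ m := by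
  simp_rw [sum_mul_exp_pow]
  rw [integral_finsetSum _ fun i _ ↦ (integrableOn_exp_mul_Ioi (hc i) 0).const_mul _,
    cauchyForm, ← sum_neg_distrib]
  refine sum_congr rfl fun i _ ↦ ?_
  rw [integral_const_mul, integral_exp_mul_Ioi_zero (hc i)]
  ring

lemma cauchyForm_nonpos {c : ι → ℝ} {m : ℕ} (hm : Even m)
    (hc : ∀ i : Fin m → ι, ∑ j, c (i j) < 0) (x : ι → ℝ) : cauchyForm c m x ≤ 0 := by
  rw [cauchyForm_eq_neg_integral hc, neg_nonpos]
  exact integral_nonneg fun t ↦ hm.pow_nonneg _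

theorem cauchy_tensor_nsd_iff_generating_vector_neg_general
    (m n : ℕ) (hme : Even m) (c : Fin n → ℝ)
    (hc : ∀ i : Fin m → Fin n, (∑ j, c (i j)) ≠ 0) :
    (∀ x : Fin n → ℝ,
        (∑ i : Fin m → Fin n, (∏ j, x (i j)) / (∑ j, c (i j))) ≤ 0) ↔
      (∀ i, c i < 0) := by
  constructor
  · intro h k
    have hmc : (m : ℝ) * c k ≠ 0 := by simpa using hc fun _ ↦ k
    exact neg_of_cauchyForm_single_nonpos hmc (h _)
  · intro hneg
    refine cauchyForm_nonpos hme fun i ↦ ?_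
    exact (sum_nonpos fun j _ ↦ (hneg (i j)).le).lt_of_ne (hc i)

/-- An even order symmetric Cauchy tensor with generating vector `c`
is negative semi-definite iff every entry of `c` is negative. -/
theorem cauchy_tensor_nsd_iff_generating_vector_neg
    (m n : ℕ) (hm : 0 < m) (hme : Even m) (c : Fin n → ℝ)
    (hc : ∀ i : Fin m → Fin n, (∑ j, c (i j)) ≠ 0) :
    (∀ x : Fin n → ℝ,
        (∑ i : Fin m → Fin n, (∏ j, x (i j)) / (∑ j, c (i j))) ≤ 0) ↔
      (∀ i, c i < 0) :=
  cauchy_tensor_nsd_iff_generating_vector_neg_general m n hme c hc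
end

section
/- Let m be an even positive integer and let 𝒞 and 𝒞′ be order m dimension n symmetric Cauchy tensors with generating vectors c and c′ respectively. If 𝒞 and 𝒞′ are positive semi-definite, then their Hadamard product 𝒞 ∘ 𝒞′ is a positive semi-definite tensor: for every x ∈ ℝ^n, Σ_{i_1,…,i_m=1}^n x_{i_1}⋯x_{i_m} / [(c_{i_1}+⋯+c_{i_m})(c′_{i_1}+⋯+c′_{i_m})] ≥ 0. -/
/-!
Testing positive semi-definiteness on a coordinate vector `e_k` gives `1 / (m c_k) ≥ 0`, so every
generating value is positive. For `a, b > 0` we have `1 / (a b) = ∫₀¹ ∫₀¹ t ^ (a - 1) s ^ (b - 1)`,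
hence the form of `𝒞 ∘ 𝒞′` at `x` is `∫₀¹ ∫₀¹ (∑ₖ xₖ t ^ cₖ s ^ c′ₖ) ^ m / (t s) ds dt`, which is
nonnegative because `m` is even.
-/

open Finset intervalIntegral

lemma integral_rpow_sub_one_eq_inv {a : ℝ} (ha : 0 < a) :
    ∫ t in (0 : ℝ)..1, t ^ (a - 1) = a⁻¹ := by
  rw [integral_rpow (Or.inl (by linarith)), sub_add_cancel, Real.one_rpow,
    Real.zero_rpow ha.ne', sub_zero, one_div]

lemma sum_div_nonneg_of_sum_mul_rpow_nonneg {ι : Type*} [Fintype ι] {p a : ι → ℝ}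
    (ha : ∀ i, 0 < a i) (h : ∀ t ∈ Set.Ioc (0 : ℝ) 1, 0 ≤ ∑ i, p i * t ^ a i) :
    0 ≤ ∑ i, p i / a i := by
  have hint : ∑ i, p i / a i = ∫ t in (0 : ℝ)..1, ∑ i, p i * t ^ (a i - 1) := by
    rw [integral_finsetSum fun i _ =>
      (intervalIntegrable_rpow' (by linarith [ha i])).const_mul (p i)]
    simp_rw [integral_const_mul, integral_rpow_sub_one_eq_inv (ha _), div_eq_mul_inv]
  rw [hint, integral_of_le zero_le_one]
  refine MeasureTheory.setIntegral_nonneg measurableSet_Ioc fun t ht => ?_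
  have hshift : ∑ i, p i * t ^ (a i - 1) = (∑ i, p i * t ^ a i) / t := by
    simp_rw [Real.rpow_sub_one ht.1.ne', sum_div, mul_div_assoc]
  rw [hshift]
  exact div_nonneg (h t ht) ht.1.le

section CauchyForm

variable {ι : Type*} [Fintype ι] {m : ℕ} {c : ι → ℝ}

lemma pos_of_cauchy_form_nonneg
    (hpsd : ∀ x : ι → ℝ, 0 ≤ ∑ i : Fin m → ι, (∏ j, x (i j)) / ∑ j, c (i j))
    {k : ι} (hk : ∑ _j : Fin m, c k ≠ 0) : 0 < c k := by
  classical
  have hdiag : ∑ i : Fin m → ι, (∏ j, (Pi.single k 1 : ι → ℝ) (i j)) / ∑ j, c (i j)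
      = (∑ _j : Fin m, c k)⁻¹ := by
    rw [sum_eq_single (fun _ => k)]
    · simp
    · intro i _ hi
      obtain ⟨j, hj⟩ : ∃ j, i j ≠ k := by
        by_contra! h
        exact hi (funext h)
      rw [prod_eq_zero (mem_univ j) (Pi.single_eq_of_ne hj 1), zero_div]
    · simp
  have hmc : 0 < (m : ℝ) * c k := by
    have := hpsd (Pi.single k 1)
    rw [hdiag, inv_nonneg] at this
    simp only [sum_const, card_univ, Fintype.card_fin, nsmul_eq_mul] at this hk
    exact this.lt_of_ne' hk
  exact pos_of_mul_pos_right hmc m.cast_nonneg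

lemma sum_pos_of_cauchy_form_nonneg (hm : 0 < m) (hc : ∀ i : Fin m → ι, ∑ j, c (i j) ≠ 0)
    (hpsd : ∀ x : ι → ℝ, 0 ≤ ∑ i : Fin m → ι, (∏ j, x (i j)) / ∑ j, c (i j))
    (i : Fin m → ι) : 0 < ∑ j, c (i j) :=
  haveI : Nonempty (Fin m) := ⟨⟨0, hm⟩⟩
  sum_pos (fun j _ => pos_of_cauchy_form_nonneg hpsd (hc fun _ => i j)) univ_nonempty

end CauchyForm

/-- The Hadamard product of two positive semi-definite even order
symmetric Cauchy tensors is positive semi-definite. -/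
theorem hadamard_product_cauchy_psd
    (m n : ℕ) (hm : 0 < m) (hme : Even m) (c c' : Fin n → ℝ)
    (hc : ∀ i : Fin m → Fin n, (∑ j, c (i j)) ≠ 0)
    (hc' : ∀ i : Fin m → Fin n, (∑ j, c' (i j)) ≠ 0)
    (hpsd : ∀ x : Fin n → ℝ,
        0 ≤ ∑ i : Fin m → Fin n, (∏ j, x (i j)) / (∑ j, c (i j)))
    (hpsd' : ∀ x : Fin n → ℝ,
        0 ≤ ∑ i : Fin m → Fin n, (∏ j, x (i j)) / (∑ j, c' (i j))) :
    ∀ x : Fin n → ℝ,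
      0 ≤ ∑ i : Fin m → Fin n,
            (∏ j, x (i j)) / ((∑ j, c (i j)) * (∑ j, c' (i j))) := by
  intro x
  simp_rw [mul_comm (∑ j, c _), ← div_div]
  refine sum_div_nonneg_of_sum_mul_rpow_nonneg
    (sum_pos_of_cauchy_form_nonneg hm hc hpsd) fun t ht => ?_
  simp_rw [div_mul_eq_mul_div]
  refine sum_div_nonneg_of_sum_mul_rpow_nonneg
    (sum_pos_of_cauchy_form_nonneg hm hc' hpsd') fun s hs => ?_
  calc 0 ≤ (∑ k, x k * t ^ c k * s ^ c' k) ^ m := hme.pow_nonneg _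
    _ = _ := by
      rw [Fintype.sum_pow]
      refine sum_congr rfl fun i _ => ?_
      rw [prod_mul_distrib, prod_mul_distrib, ← Real.rpow_sum_of_pos ht.1,
        ← Real.rpow_sum_of_pos hs.1]
end
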